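/- arXiv:2007.13710 — 2 statements merged into one kernel-verified Lean document; each statement's English description precedes it below -/
import Mathlib

section
/- Let G = (Γ, R, B) be a chromatically invariant 2-edge-coloured graph with R ≠ ∅ and B ≠ ∅. Suppose the vertex set V admits a partition into two non-empty sets X and Y such that every vertex of X is adjacent in Γ to every vertex of Y, and neither the subgraph of Γ induced on X nor the subgraph of Γ induced on Y is a join. Then all edges of Γ with one end in X and one end in Y lie in R, or all of them lie in B. -/
open SimpleGraph Polynomial

/-- A `k`-colouring of a mixed 2-edge-coloured graph with red edge graph `R`,
blue edge graph `B`, and extra uncoloured edge graph `F`. -/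
def IsMixedColouring {V : Type*} (R B F : SimpleGraph V) {k : ℕ} (c : V → Fin k) : Prop :=
  (∀ u v, (R ⊔ B ⊔ F).Adj u v → c u ≠ c v) ∧
  (∀ u x v y, R.Adj u x → B.Adj v y → c u = c v → c x ≠ c y)

/-- The number of `k`-colourings of the mixed 2-edge-coloured graph `(R, B, F)`. -/
noncomputable def numColourings {V : Type*} (R B F : SimpleGraph V) (k : ℕ) : ℕ :=
  Nat.card {c : V → Fin k // IsMixedColouring R B F c}

/-- A bichromatic 2-path `(x, u, y)`: `xu` red, `uy` blue, `xy` not an edge of `S(M)`. -/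
def IsBiPath {V : Type*} (R B F : SimpleGraph V) (x u y : V) : Prop :=
  R.Adj x u ∧ B.Adj u y ∧ ¬(R ⊔ B ⊔ F).Adj x y

/-- The number of bichromatic 2-paths. -/
noncomputable def numBiPaths {V : Type*} (R B F : SimpleGraph V) : ℕ :=
  Nat.card {p : V × V × V // IsBiPath R B F p.1 p.2.1 p.2.2}

/-- The graph `Λ(M)`: all edges of `S(M)` plus edges joining the ends of
bichromatic 2-paths. -/
def LambdaGraph {V : Type*} (R B F : SimpleGraph V) : SimpleGraph V where
  Adj a b := a ≠ b ∧ ((R ⊔ B ⊔ F).Adj a b ∨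
    ∃ w, IsBiPath R B F a w b ∨ IsBiPath R B F b w a)
  symm := by
    constructor
    rintro a b ⟨hab, h⟩
    refine ⟨hab.symm, ?_⟩
    rcases h with h | ⟨w, h⟩
    · exact Or.inl h.symm
    · exact Or.inr ⟨w, h.symm⟩
  loopless := ⟨fun a h => h.1 rfl⟩

/-- `(p.1, p.2)` is a pair of obstructing edges: `p.1` a red edge `ux`, `p.2` a blue edge
`vy`, with the subgraph of `Λ` induced on `{u, x, v, y}` of chromatic number 2. -/
def IsObstructingPair {V : Type*} (R B F : SimpleGraph V) (p : Sym2 V × Sym2 V) : Prop :=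
  ∃ u x v y : V, p.1 = s(u, x) ∧ p.2 = s(v, y) ∧ R.Adj u x ∧ B.Adj v y ∧
    (SimpleGraph.induce {u, x, v, y} (LambdaGraph R B F)).chromaticNumber = 2

/-- The number of pairs of obstructing edges. -/
noncomputable def numObstructing {V : Type*} (R B F : SimpleGraph V) : ℕ :=
  Nat.card {p : Sym2 V × Sym2 V // IsObstructingPair R B F p}

/-- The number of 3-element vertex subsets inducing a triangle. -/
noncomputable def numTriangles {V : Type*} (G : SimpleGraph V) : ℕ :=
  Nat.card {s : Finset V // s.card = 3 ∧ ∀ a ∈ s, ∀ b ∈ s, a ≠ b → G.Adj a b}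

/-- A 2-edge-coloured graph is chromatically invariant when for each `k` its number of
`k`-colourings equals the number of proper `k`-colourings of the underlying graph. -/
def ChromaticallyInvariant {V : Type*} (R B : SimpleGraph V) : Prop :=
  ∀ k : ℕ, Nat.card {c : V → Fin k // IsMixedColouring R B ⊥ c} =
    Nat.card {c : V → Fin k // ∀ u v, (R ⊔ B).Adj u v → c u ≠ c v}

/-- A graph is a join when its vertex set has a partition into two non-empty parts with
every vertex of one part adjacent to every vertex of the other. -/
def IsJoin {W : Type*} (G : SimpleGraph W) : Prop :=
  ∃ X Y : Set W, X.Nonempty ∧ Y.Nonempty ∧ Disjoint X Y ∧ X ∪ Y = Set.univ ∧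
    ∀ x ∈ X, ∀ y ∈ Y, G.Adj x y

/-- Disjoint union of two simple graphs. -/
def disjUnion {α β : Type*} (G : SimpleGraph α) (H : SimpleGraph β) :
    SimpleGraph (α ⊕ β) where
  Adj a b := match a, b with
    | Sum.inl a, Sum.inl b => G.Adj a b
    | Sum.inr a, Sum.inr b => H.Adj a b
    | _, _ => False
  symm := by constructor; rintro (a | a) (b | b) h <;> simp_all <;> exact h.symm
  loopless := by constructor; rintro (a | a) h <;> exact (SimpleGraph.irrefl _) h

/-- The complete bipartite "cross" graph between the two sides of a sum type. -/
def crossGraph (α β : Type*) : SimpleGraph (α ⊕ β) where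
  Adj a b := match a, b with
    | Sum.inl _, Sum.inr _ => True
    | Sum.inr _, Sum.inl _ => True
    | _, _ => False
  symm := by constructor; rintro (a | a) (b | b) h <;> trivial
  loopless := by constructor; rintro (a | a) h <;> exact h

/-!
A red edge `xu` and a blue edge `uy` whose far ends `x`, `y` are non-adjacent are impossible
in a chromatically invariant graph: the proper colouring giving every vertex its own colour
except that `y` copies the colour of `x` violates the mixed condition at `xu`, `yu`. Hence,
if `a`, `b` are non-adjacent and both adjacent to `y`, then `ay` is red iff `by` is. Inside
`X` the non-adjacency graph is connected because `X` is not a join, so whether `xy` is red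
does not depend on `x ∈ X`; symmetrically it does not depend on `y ∈ Y`.
-/

theorem SimpleGraph.Reachable.iff_of_forall_adj {W : Type*} {G : SimpleGraph W} {P : W → Prop}
    (hP : ∀ a b, G.Adj a b → (P a ↔ P b)) {a b : W} (h : G.Reachable a b) : P a ↔ P b := by
  obtain ⟨p⟩ := h
  induction p with
  | nil => rfl
  | cons hadj _ ih => exact (hP _ _ hadj).trans ih

theorem preconnected_compl_of_not_isJoin {W : Type*} {G : SimpleGraph W} (h : ¬ IsJoin G) :
    Gᶜ.Preconnected := by
  intro a b
  by_contra hab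
  refine h ⟨{v | Gᶜ.Reachable a v}, {v | Gᶜ.Reachable a v}ᶜ, ⟨a, .rfl⟩, ⟨b, hab⟩,
    disjoint_compl_right, Set.union_compl_self _, fun x hx y hy => ?_⟩
  simpa using (Gᶜ.reachable_or_compl_adj x y).resolve_left fun hxy => hy (hx.trans hxy)

namespace ChromaticallyInvariant

variable {V : Type*} [Finite V] {R B : SimpleGraph V}

theorem isMixedColouring (h : ChromaticallyInvariant R B) {k : ℕ} {c : V → Fin k}
    (hc : ∀ u v, (R ⊔ B).Adj u v → c u ≠ c v) : IsMixedColouring R B ⊥ c := by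
  have hsub : {d : V → Fin k | IsMixedColouring R B ⊥ d} ⊆
      {d | ∀ u v, (R ⊔ B).Adj u v → d u ≠ d v} :=
    fun d hd u v huv => hd.1 u v (by simpa using huv)
  have hcard : {d : V → Fin k | ∀ u v, (R ⊔ B).Adj u v → d u ≠ d v}.ncard ≤
      {d : V → Fin k | IsMixedColouring R B ⊥ d}.ncard := by
    rw [← Nat.card_coe_set_eq, ← Nat.card_coe_set_eq]
    exact (h k).ge
  exact (Set.eq_of_subset_of_ncard_le hsub hcard (Set.toFinite _)).superset hc

theorem not_isBiPath (h : ChromaticallyInvariant R B) (x u y : V) : ¬ IsBiPath R B ⊥ x u y := by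
  classical
  rintro ⟨hxu, huy, hxy⟩
  simp only [sup_bot_eq] at hxy
  let e := Finite.equivFin V
  let c : V → Fin (Nat.card V) := fun v => e (if v = y then x else v)
  have hc : ∀ v w, (R ⊔ B).Adj v w → c v ≠ c w := by
    intro v w hvw hcvw
    have hvw' : (if v = y then x else v) = (if w = y then x else w) := e.injective hcvw
    split_ifs at hvw' with hv hw hw
    · exact hvw.ne (hv.trans hw.symm)
    · subst hv hvw'; exact hxy hvw.symm
    · subst hw hvw'; exact hxy hvw
    · exact hvw.ne hvw'
  exact (h.isMixedColouring hc).2 x u y u hxu huy.symm (by simp [c]) rfl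

theorem red_adj_iff_of_not_adj (h : ChromaticallyInvariant R B) {a b y : V}
    (hab : ¬ (R ⊔ B).Adj a b) (ha : (R ⊔ B).Adj a y) (hb : (R ⊔ B).Adj b y) :
    R.Adj a y ↔ R.Adj b y := by
  suffices key : ∀ a b, ¬ (R ⊔ B).Adj a b → (R ⊔ B).Adj b y → R.Adj a y → R.Adj b y from
    ⟨key a b hab hb, key b a (fun hba => hab hba.symm) ha⟩
  intro a b hab hb hay
  exact hb.resolve_right fun hby => h.not_isBiPath a y b ⟨hay, hby.symm, by simpa using hab⟩

theorem red_adj_iff_of_not_isJoin (h : ChromaticallyInvariant R B) {S : Set V}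
    (hS : ¬ IsJoin (SimpleGraph.induce S (R ⊔ B))) {y : V} (hy : ∀ s ∈ S, (R ⊔ B).Adj s y)
    {a b : V} (ha : a ∈ S) (hb : b ∈ S) : R.Adj a y ↔ R.Adj b y :=
  (preconnected_compl_of_not_isJoin hS ⟨a, ha⟩ ⟨b, hb⟩).iff_of_forall_adj
    (P := fun s : S => R.Adj s y) fun s t hst =>
      h.red_adj_iff_of_not_adj (by simpa using hst.2) (hy s s.2) (hy t t.2)

end ChromaticallyInvariant

theorem joining_edges_monochromatic_general
    {V : Type*} [Fintype V] (R B : SimpleGraph V)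
    (hInv : ChromaticallyInvariant R B)
    (X Y : Set V) (hX : X.Nonempty) (hY : Y.Nonempty)
    (hjoin : ∀ x ∈ X, ∀ y ∈ Y, (R ⊔ B).Adj x y)
    (hXnj : ¬ IsJoin (SimpleGraph.induce X (R ⊔ B)))
    (hYnj : ¬ IsJoin (SimpleGraph.induce Y (R ⊔ B))) :
    (∀ x ∈ X, ∀ y ∈ Y, (R ⊔ B).Adj x y → R.Adj x y) ∨
    (∀ x ∈ X, ∀ y ∈ Y, (R ⊔ B).Adj x y → B.Adj x y) := by
  obtain ⟨x₀, hx₀⟩ := hX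
  obtain ⟨y₀, hy₀⟩ := hY
  have hred : ∀ x ∈ X, ∀ y ∈ Y, R.Adj x y ↔ R.Adj x₀ y₀ := fun x hx y hy =>
    calc R.Adj x y ↔ R.Adj x y₀ := by
          simpa only [R.adj_comm x] using
            hInv.red_adj_iff_of_not_isJoin hYnj (fun s hs => (hjoin x hx s hs).symm) hy hy₀
      _ ↔ R.Adj x₀ y₀ :=
          hInv.red_adj_iff_of_not_isJoin hXnj (fun s hs => hjoin s hs y₀ hy₀) hx hx₀
  by_cases h₀ : R.Adj x₀ y₀
  · exact Or.inl fun x hx y hy _ => (hred x hx y hy).2 h₀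
  · exact Or.inr fun x hx y hy hxy => hxy.resolve_left fun hr => h₀ ((hred x hx y hy).1 hr)

/-- In a non-trivial chromatically invariant 2-edge-coloured graph whose underlying graph
is the join of two graphs neither of which is a join, all joining edges get the same
colour. -/
theorem joining_edges_monochromatic
    {V : Type*} [Fintype V] (R B : SimpleGraph V) (hRB : Disjoint R B)
    (hInv : ChromaticallyInvariant R B) (hR : R ≠ ⊥) (hB : B ≠ ⊥)
    (X Y : Set V) (hX : X.Nonempty) (hY : Y.Nonempty) (hdisj : Disjoint X Y)
    (hcover : X ∪ Y = Set.univ)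
    (hjoin : ∀ x ∈ X, ∀ y ∈ Y, (R ⊔ B).Adj x y)
    (hXnj : ¬ IsJoin (SimpleGraph.induce X (R ⊔ B)))
    (hYnj : ¬ IsJoin (SimpleGraph.induce Y (R ⊔ B))) :
    (∀ x ∈ X, ∀ y ∈ Y, (R ⊔ B).Adj x y → R.Adj x y) ∨
    (∀ x ∈ X, ∀ y ∈ Y, (R ⊔ B).Adj x y → B.Adj x y) :=
  joining_edges_monochromatic_general R B hInv X Y hX hY hjoin hXnj hYnj
end

section
/- For every real number r and every real ε > 0 there exists a 2-edge-coloured graph G = (Γ, R, B) with R ≠ ∅ and B ≠ ∅ and a real number a with |r − a| < ε such that the chromatic polynomial P of G satisfies P(a) = 0 (P evaluated as a polynomial over the reals). In other words, the real roots of chromatic polynomials of bichromatic 2-edge-coloured graphs are dense in ℝ. -/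
open SimpleGraph Polynomial

/-!
Take a red path on `m + 1` vertices and a disjoint blue clique on `b` vertices. The clique takes
`b` distinct colours and no red edge may carry two of them, so the chromatic polynomial is the
falling factorial `x (x - 1) ⋯ (x - b + 1)` times the number `W_m(x)` of colourings of the path in
which adjacent vertices get distinct colours, not both from a fixed `b`-set. Splitting by the
colour of the first vertex gives `W_{m+2} = (x - b - 1) W_{m+1} + b (x - b) W_m` with `W_0 = x`.
For `|x| ≤ b - 2` the characteristic roots `λ(x), conj λ(x)` are not real, and wherever `λ(x)^m` is
real, `W_m(x) = λ(x)^m x`. As `arg λ(x)` is continuous and not constant, on a short interval on one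
side of `0` the function `m · arg λ(x)` passes through two consecutive multiples of `π` once `m` is
large; there `W_m` takes opposite signs, and the intermediate value theorem gives a root.
-/

open Finset hiding disjUnion
open scoped Real

section PathHoms

variable {α : Type*} [Fintype α] (H : SimpleGraph α) [DecidableRel H.Adj]

def pathHoms (n : ℕ) : Finset (Fin (n + 1) → α) :=
  univ.filter fun f => ∀ i : Fin n, H.Adj (f i.castSucc) (f i.succ)

variable {H}

lemma mem_pathHoms_iff_pathGraph_adj {n : ℕ} {f : Fin (n + 1) → α} :
    f ∈ pathHoms H n ↔ ∀ i j, (pathGraph (n + 1)).Adj i j → H.Adj (f i) (f j) := by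
  refine ⟨fun hf i j hij => ?_, fun hf => mem_filter.2 ⟨mem_univ _, fun i => hf _ _ ?_⟩⟩
  · have hf' := (mem_filter.1 hf).2
    rcases pathGraph_adj.1 hij with h | h
    · convert hf' ⟨i, by omega⟩ using 2 <;> ext <;> simp [h]
    · convert (hf' ⟨j, by omega⟩).symm using 2 <;> ext <;> simp [h]
  · simp [pathGraph_adj]

lemma cons_mem_pathHoms_succ {n : ℕ} (x : α) (g : Fin (n + 1) → α) :
    Fin.cons x g ∈ pathHoms H (n + 1) ↔ H.Adj x (g 0) ∧ g ∈ pathHoms H n := by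
  simp [pathHoms, Fin.forall_fin_succ]

variable (H) [DecidableEq α]

lemma card_filter_pathHoms_zero (T : Finset α) : #{f ∈ pathHoms H 0 | f 0 ∈ T} = #T := by
  refine card_nbij' (fun f => f 0) (fun x _ => x) ?_ ?_ ?_ ?_ <;> intro f <;>
    simp [pathHoms, funext_iff, Fin.forall_fin_one]

lemma card_filter_pathHoms_succ (T : Finset α) (n : ℕ) :
    #{f ∈ pathHoms H (n + 1) | f 0 ∈ T} = ∑ g ∈ pathHoms H n, #{x ∈ T | H.Adj x (g 0)} := by
  rw [← card_sigma]
  refine card_nbij' (fun f => ⟨Fin.tail f, f 0⟩) (fun p => Fin.cons p.2 p.1) ?_ ?_ ?_ ?_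
  · intro f hf
    rw [mem_coe, mem_filter, ← Fin.cons_self_tail f, cons_mem_pathHoms_succ] at hf
    simp_all
  · rintro ⟨g, x⟩ hp
    simp only [coe_sigma, Set.mem_sigma_iff, mem_coe, mem_filter] at hp ⊢
    exact ⟨(cons_mem_pathHoms_succ x g).2 ⟨hp.2.2, hp.1⟩, by simpa using hp.2.1⟩
  · intro f _
    simp
  · rintro ⟨g, x⟩ _
    simp

lemma card_pathHoms_eq_add (T : Finset α) (n : ℕ) :
    #(pathHoms H n) = #{f ∈ pathHoms H n | f 0 ∈ T} + #{f ∈ pathHoms H n | f 0 ∈ Tᶜ} := by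
  simp only [mem_compl]
  exact (card_filter_add_card_filter_not _).symm

end PathHoms

section AvoidGraph

variable {α : Type*} [DecidableEq α]

-- The colour pairs allowed on a red edge when the blue clique is coloured with `S`.
def avoidGraph (S : Finset α) : SimpleGraph α where
  Adj x y := x ≠ y ∧ ¬(x ∈ S ∧ y ∈ S)
  symm := ⟨fun _ _ h => ⟨h.1.symm, fun h' => h.2 h'.symm⟩⟩
  loopless := ⟨fun _ h => h.1 rfl⟩

instance (S : Finset α) : DecidableRel (avoidGraph S).Adj :=
  fun x y => inferInstanceAs (Decidable (x ≠ y ∧ ¬(x ∈ S ∧ y ∈ S)))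

variable (S : Finset α)

lemma card_filter_mem_avoidGraph_adj (y : α) :
    #{x ∈ S | (avoidGraph S).Adj x y} = if y ∈ S then 0 else #S := by
  split_ifs with hy
  · exact card_eq_zero.2 (filter_eq_empty_iff.2 fun x hx h => h.2 ⟨hx, hy⟩)
  · exact congrArg card (filter_true_of_mem fun x hx => ⟨fun h => hy (h ▸ hx), fun h => hy h.2⟩)

variable [Fintype α]

lemma cast_card_filter_compl_avoidGraph_adj (y : α) :
    (#{x ∈ Sᶜ | (avoidGraph S).Adj x y} : ℚ) = #Sᶜ - if y ∈ S then 0 else 1 := by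
  split_ifs with hy
  · rw [sub_zero, filter_true_of_mem fun x hx => ?_]
    exact ⟨fun h => mem_compl.1 hx (h ▸ hy), fun h => mem_compl.1 hx h.1⟩
  · rw [← cast_card_erase_of_mem (mem_compl.2 hy)]
    congr 2
    ext x
    simp only [mem_filter, mem_erase]
    exact ⟨fun h => ⟨h.2.1, h.1⟩, fun h => ⟨h.2, h.1, fun h' => hy h'.2⟩⟩

lemma card_filter_pathHoms_avoidGraph_mem_succ (n : ℕ) :
    #{f ∈ pathHoms (avoidGraph S) (n + 1) | f 0 ∈ S} =
      #S * #{f ∈ pathHoms (avoidGraph S) n | f 0 ∈ Sᶜ} := by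
  simp only [card_filter_pathHoms_succ, card_filter_mem_avoidGraph_adj, sum_ite, sum_const_zero,
    sum_const, zero_add, smul_eq_mul, mem_compl, mul_comm]

lemma cast_card_filter_pathHoms_avoidGraph_compl_succ (n : ℕ) :
    (#{f ∈ pathHoms (avoidGraph S) (n + 1) | f 0 ∈ Sᶜ} : ℚ) =
      #Sᶜ * #(pathHoms (avoidGraph S) n) - #{f ∈ pathHoms (avoidGraph S) n | f 0 ∈ Sᶜ} := by
  rw [card_filter_pathHoms_succ, Nat.cast_sum]
  simp only [cast_card_filter_compl_avoidGraph_adj, sum_sub_distrib, sum_const, nsmul_eq_mul,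
    ← mem_compl, sum_ite, zero_mul, one_mul, zero_add, mul_comm]

lemma cast_card_pathHoms_avoidGraph_add_two (n : ℕ) :
    (#(pathHoms (avoidGraph S) (n + 2)) : ℚ) =
      (#Sᶜ - 1) * #(pathHoms (avoidGraph S) (n + 1)) +
        #S * #Sᶜ * #(pathHoms (avoidGraph S) n) := by
  have hsplit (m : ℕ) := congrArg (Nat.cast (R := ℚ)) (card_pathHoms_eq_add (avoidGraph S) S m)
  have hmem (m : ℕ) :=
    congrArg (Nat.cast (R := ℚ)) (card_filter_pathHoms_avoidGraph_mem_succ S m)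
  push_cast at hsplit hmem
  linear_combination hsplit (n + 2) + hsplit (n + 1) + hmem (n + 1) + hmem n +
    cast_card_filter_pathHoms_avoidGraph_compl_succ S (n + 1) +
    #S * cast_card_filter_pathHoms_avoidGraph_compl_succ S n

end AvoidGraph

noncomputable def pathPoly (b : ℕ) : ℕ → ℚ[X]
  | 0 => X
  | 1 => (X - (b : ℚ[X])) * (X + (b : ℚ[X]) - 1)
  | n + 2 =>
    (X - (b : ℚ[X]) - 1) * pathPoly b (n + 1) + (b : ℚ[X]) * (X - (b : ℚ[X])) * pathPoly b n

theorem cast_card_pathHoms_avoidGraph {α : Type*} [Fintype α] [DecidableEq α] (S : Finset α) :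
    ∀ n, (#(pathHoms (avoidGraph S) n) : ℚ) = (pathPoly #S n).eval (Fintype.card α : ℚ)
  | 0 => by
    rw [card_pathHoms_eq_add _ S, card_filter_pathHoms_zero, card_filter_pathHoms_zero, pathPoly,
      eval_X, ← card_add_card_compl S, Nat.cast_add]
  | 1 => by
    rw [card_pathHoms_eq_add _ S, Nat.cast_add, card_filter_pathHoms_avoidGraph_mem_succ,
      cast_card_filter_pathHoms_avoidGraph_compl_succ, card_pathHoms_eq_add _ S, pathPoly,
      ← card_add_card_compl S]
    simp only [card_filter_pathHoms_zero, Nat.cast_mul, Nat.cast_add, eval_mul, eval_add,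
      eval_sub, eval_X, eval_natCast, eval_one]
    ring
  | n + 2 => by
    rw [cast_card_pathHoms_avoidGraph_add_two, cast_card_pathHoms_avoidGraph S (n + 1),
      cast_card_pathHoms_avoidGraph S n, pathPoly, ← card_add_card_compl S]
    simp only [Nat.cast_add, eval_mul, eval_add, eval_sub, eval_X, eval_natCast, eval_one]
    ring

section Transport

variable {V W : Type*}

lemma isMixedColouring_comap {k : ℕ} (e : V ≃ W) (R B F : SimpleGraph W) (c : W → Fin k) :
    IsMixedColouring (R.comap e) (B.comap e) (F.comap e) (c ∘ e) ↔ IsMixedColouring R B F c := by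
  simp only [IsMixedColouring, sup_adj, comap_adj, Function.comp_apply]
  refine and_congr ⟨fun h u v => ?_, fun h u v => h _ _⟩
    ⟨fun h u x v y => ?_, fun h u x v y => h _ _ _ _⟩
  · simpa using h (e.symm u) (e.symm v)
  · simpa using h (e.symm u) (e.symm x) (e.symm v) (e.symm y)

lemma numColourings_comap (e : V ≃ W) (R B F : SimpleGraph W) (k : ℕ) :
    numColourings (R.comap e) (B.comap e) (F.comap e) k = numColourings R B F k :=
  Nat.card_congr <| ((e.arrowCongr (.refl _)).subtypeEquiv fun c => by
    rw [← isMixedColouring_comap e]; simp [Function.comp_def])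

end Transport

lemma isMixedColouring_disjUnion_iff {α β : Type*} [Fintype β] {k : ℕ} (G : SimpleGraph α)
    (c : α ⊕ β → Fin k) :
    IsMixedColouring (disjUnion G ⊥) (disjUnion ⊥ ⊤) ⊥ c ↔
      Function.Injective (c ∘ Sum.inr) ∧ ∀ i j, G.Adj i j →
        (avoidGraph (univ.image (c ∘ Sum.inr))).Adj (c (.inl i)) (c (.inl j)) := by
  constructor
  · rintro ⟨hproper, hpair⟩
    refine ⟨fun j j' hc => by_contra fun hne =>
        hproper (.inr j) (.inr j') (by simp [disjUnion, hne]) hc,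
      fun i j hij => ⟨hproper (.inl i) (.inl j) (by simp [disjUnion, hij]), ?_⟩⟩
    simp only [mem_image, mem_univ, true_and, Function.comp_apply]
    rintro ⟨⟨v, hv⟩, ⟨y, hy⟩⟩
    obtain rfl | hvy := eq_or_ne v y
    · exact hproper (.inl i) (.inl j) (by simp [disjUnion, hij]) (hv.symm.trans hy)
    · exact hpair (.inl i) (.inl j) (.inr v) (.inr y) hij (by simp [disjUnion, hvy]) hv.symm
        hy.symm
  · rintro ⟨hinj, havoid⟩
    refine ⟨?_, ?_⟩
    · rintro (i | i) (j | j) hadj <;> simp [disjUnion] at hadj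
      · exact (havoid i j hadj).1
      · exact hinj.ne hadj
    · rintro (u | u) (x | x) (v | v) (y | y) hR hB hc <;> simp [disjUnion] at hR hB
      exact fun hxy => (havoid u x hR).2
        ⟨mem_image.2 ⟨v, mem_univ _, hc.symm⟩, mem_image.2 ⟨y, mem_univ _, hxy.symm⟩⟩

def mixedColouringsDisjUnionEquiv {α β : Type*} [Fintype β] (k : ℕ) (G : SimpleGraph α) :
    {c : α ⊕ β → Fin k // IsMixedColouring (disjUnion G ⊥) (disjUnion ⊥ ⊤) ⊥ c} ≃
      Σ g : {g : β → Fin k // Function.Injective g},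
        {f : α → Fin k // ∀ i j, G.Adj i j → (avoidGraph (univ.image g.1)).Adj (f i) (f j)} where
  toFun c := ⟨⟨c.1 ∘ Sum.inr, ((isMixedColouring_disjUnion_iff G c.1).1 c.2).1⟩,
    ⟨c.1 ∘ Sum.inl, ((isMixedColouring_disjUnion_iff G c.1).1 c.2).2⟩⟩
  invFun p := ⟨Sum.elim p.2.1 p.1.1, (isMixedColouring_disjUnion_iff G _).2 ⟨p.1.2, p.2.2⟩⟩
  left_inv c := Subtype.ext (Sum.elim_comp_inl_inr c.1)
  right_inv _ := rfl

lemma cast_numColourings_disjUnion_pathGraph (m b k : ℕ) :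
    (numColourings (disjUnion (pathGraph (m + 1)) ⊥) (disjUnion ⊥ (⊤ : SimpleGraph (Fin b))) ⊥ k
      : ℚ) = (descPochhammer ℚ b * pathPoly b m).eval (k : ℚ) := by
  have hpath (g : {g : Fin b → Fin k // Function.Injective g}) :
      (Nat.card {f : Fin (m + 1) → Fin k // ∀ i j, (pathGraph (m + 1)).Adj i j →
        (avoidGraph (univ.image g.1)).Adj (f i) (f j)} : ℚ) = (pathPoly b m).eval (k : ℚ) := by
    rw [Nat.card_congr (Equiv.subtypeEquivRight fun f => mem_pathHoms_iff_pathGraph_adj.symm),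
      Nat.card_eq_finsetCard, cast_card_pathHoms_avoidGraph, card_image_of_injective _ g.2,
      card_fin, Fintype.card_fin]
  rw [numColourings, Nat.card_congr (mixedColouringsDisjUnionEquiv k _), Nat.card_sigma,
    Nat.cast_sum, sum_congr rfl fun g _ => hpath g, sum_const, card_univ, nsmul_eq_mul,
    Fintype.card_congr (Equiv.subtypeInjectiveEquivEmbedding _ _), Fintype.card_embedding_eq,
    eval_mul, descPochhammer_eval_eq_descFactorial]
  simp

section UpperRoot

open Complex

variable {p q : ℝ}

noncomputable def upperRoot (p q : ℝ) : ℂ := (p / 2 : ℝ) + (√(-(p ^ 2 + 4 * q)) / 2 : ℝ) * I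

@[simp] lemma upperRoot_re : (upperRoot p q).re = p / 2 := by simp [upperRoot]

@[simp] lemma upperRoot_im : (upperRoot p q).im = √(-(p ^ 2 + 4 * q)) / 2 := by simp [upperRoot]

lemma upperRoot_im_pos (h : p ^ 2 + 4 * q < 0) : 0 < (upperRoot p q).im := by
  rw [upperRoot_im]
  exact div_pos (Real.sqrt_pos.2 (by linarith)) two_pos

lemma upperRoot_sq (h : p ^ 2 + 4 * q < 0) : upperRoot p q ^ 2 = p * upperRoot p q + q := by
  have hs := Real.sq_sqrt (by linarith : 0 ≤ -(p ^ 2 + 4 * q))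
  rw [sq]
  apply Complex.ext <;>
    simp only [mul_re, mul_im, add_re, add_im, ofReal_re, ofReal_im, upperRoot_re,
      upperRoot_im] <;>
    nlinarith [hs]

lemma norm_upperRoot_sq (h : p ^ 2 + 4 * q < 0) : ‖upperRoot p q‖ ^ 2 = -q := by
  have hs := Real.sq_sqrt (by linarith : 0 ≤ -(p ^ 2 + 4 * q))
  rw [Complex.sq_norm, normSq_apply, upperRoot_re, upperRoot_im]
  nlinarith [hs]

lemma sq_mul_eq_of_arg_upperRoot_eq {p' q' : ℝ} (h : p ^ 2 + 4 * q < 0) (h' : p' ^ 2 + 4 * q' < 0)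
    (harg : arg (upperRoot p q) = arg (upperRoot p' q')) : p ^ 2 * q' = p' ^ 2 * q := by
  have hz : upperRoot p q ≠ 0 := fun h0 => (upperRoot_im_pos h).ne' (by simp [h0])
  have hz' : upperRoot p' q' ≠ 0 := fun h0 => (upperRoot_im_pos h').ne' (by simp [h0])
  have hcos := congrArg (fun θ => Real.cos θ ^ 2) harg
  simp only [cos_arg hz, cos_arg hz', div_pow, norm_upperRoot_sq h, norm_upperRoot_sq h',
    upperRoot_re] at hcos
  have hq : q < 0 := by nlinarith
  have hq' : q' < 0 := by nlinarith
  rw [div_div, div_div, div_eq_div_iff (by nlinarith) (by nlinarith)] at hcos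
  linarith

end UpperRoot

lemma pow_eq_neg_one_zpow_mul_norm_pow {z : ℂ} {n : ℕ} {j : ℤ} (h : n * Complex.arg z = j * π) :
    z ^ n = ((-1 : ℝ) ^ j * ‖z‖ ^ n : ℝ) := by
  have h' : (n : ℂ) * (Complex.arg z * Complex.I) = j * (π * Complex.I) := by
    rw [← mul_assoc, ← mul_assoc]
    exact_mod_cast congrArg (fun t : ℝ => (t : ℂ) * Complex.I) h
  conv_lhs => rw [← Complex.norm_mul_exp_arg_mul_I z]
  rw [mul_pow, ← Complex.exp_nat_mul, h', Complex.exp_int_mul, Complex.exp_pi_mul_I]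
  push_cast
  ring

lemma eq_mul_of_pow_eq_ofReal {u : ℕ → ℝ} {p q : ℝ} {z : ℂ} (hz : z.im ≠ 0)
    (hzsq : z ^ 2 = p * z + q) (hu : ∀ n, u (n + 2) = p * u (n + 1) + q * u n) {n : ℕ} {ρ : ℝ}
    (hρ : z ^ n = ρ) : u n = ρ * u 0 := by
  set A : ℂ := ⟨u 0 / 2, (u 0 * z.re - u 1) / (2 * z.im)⟩
  have hA : ∀ n, u n = 2 * (A * z ^ n).re := by
    intro n
    induction n using Nat.twoStepInduction with
    | zero =>
      simp only [pow_zero, mul_one, A]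
      ring
    | one =>
      simp only [pow_one, Complex.mul_re, A]
      field_simp
      ring
    | more n ih ih' =>
      have : A * z ^ (n + 2) = p * (A * z ^ (n + 1)) + q * (A * z ^ n) := by
        linear_combination A * z ^ n * hzsq
      rw [hu, ih, ih', this]
      simp only [Complex.add_re, Complex.re_ofReal_mul]
      ring
  rw [hA, hA 0, hρ, pow_zero, mul_one, mul_comm A, Complex.re_ofReal_mul]
  ring

section IntermediateValue

open Set

lemma exists_mem_uIcc_eq_zero_of_mul_nonpos {f : ℝ → ℝ} {x y : ℝ} (hf : ContinuousOn f (uIcc x y))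
    (h : f x * f y ≤ 0) : ∃ z ∈ uIcc x y, f z = 0 := by
  have h0 : (0 : ℝ) ∈ uIcc (f x) (f y) := by
    rcases mul_nonpos_iff.1 h with ⟨hx, hy⟩ | ⟨hx, hy⟩
    · exact mem_uIcc.2 (Or.inr ⟨hy, hx⟩)
    · exact mem_uIcc.2 (Or.inl ⟨hx, hy⟩)
  exact intermediate_value_uIcc hf h0

lemma exists_eq_int_mul_and_eq_int_add_one_mul {f : ℝ → ℝ} {a b T : ℝ} (hab : a ≤ b)
    (hf : ContinuousOn f (Icc a b)) (hT : 0 < T) (h : 2 * T < |f b - f a|) :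
    ∃ j : ℤ, ∃ x ∈ Icc a b, ∃ y ∈ Icc a b, f x = j * T ∧ f y = (j + 1) * T := by
  set L := min (f a) (f b)
  set j := ⌈L / T⌉
  have hjL : L ≤ j * T := (div_le_iff₀ hT).1 (Int.le_ceil _)
  have hjL' : j * T < L + T := by
    have := (lt_div_iff₀ hT).1 (by linarith [Int.ceil_lt_add_one (L / T)] : (j : ℝ) - 1 < L / T)
    linarith
  have hUL : max (f a) (f b) - L = |f b - f a| := max_sub_min_eq_abs (f a) (f b)
  have himage : Icc L (max (f a) (f b)) ⊆ f '' Icc a b := by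
    have := intermediate_value_uIcc (a := a) (b := b) (by rwa [uIcc_of_le hab])
    rwa [uIcc_of_le hab] at this
  obtain ⟨x, hx, hfx⟩ := himage ⟨hjL, by linarith⟩
  obtain ⟨y, hy, hfy⟩ := himage (a := (j + 1) * T) ⟨by linarith, by linarith⟩
  exact ⟨j, x, hx, y, hy, hfx, hfy⟩

end IntermediateValue

section RootsOfPathPoly

open Set Complex

lemma aeval_pathPoly_zero (b : ℕ) (x : ℝ) : aeval x (pathPoly b 0) = x := by
  simp [pathPoly]

lemma aeval_pathPoly_add_two (b n : ℕ) (x : ℝ) :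
    aeval x (pathPoly b (n + 2)) =
      (x - b - 1) * aeval x (pathPoly b (n + 1)) + b * (x - b) * aeval x (pathPoly b n) := by
  simp [pathPoly]

noncomputable def pathPolyRoot (b : ℕ) (x : ℝ) : ℂ := upperRoot (x - b - 1) (b * (x - b))

lemma discr_neg_of_abs_le {b x : ℝ} (h : |x| ≤ b - 2) :
    (x - b - 1) ^ 2 + 4 * (b * (x - b)) < 0 := by
  rw [abs_le] at h
  nlinarith [mul_nonneg (by linarith : (0 : ℝ) ≤ b - 2 - x) (by linarith : (0 : ℝ) ≤ x + b - 2)]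

lemma sq_mul_lt_sq_mul {b x y : ℝ} (hb : 0 < b) (hxy : x < y) (hy : y ≤ b - 2) :
    (x - b - 1) ^ 2 * (b * (y - b)) < (y - b - 1) ^ 2 * (b * (x - b)) := by
  have key : (y - b - 1) ^ 2 * (b * (x - b)) - (x - b - 1) ^ 2 * (b * (y - b)) =
      b * (y - x) * ((b - x) * (b - y) - 1) := by ring
  have : 0 < b * (y - x) * ((b - x) * (b - y) - 1) :=
    mul_pos (mul_pos hb (by linarith)) (by nlinarith)
  linarith

variable {b : ℕ}

lemma aeval_pathPoly_of_mul_arg_eq {x : ℝ} (hx : |x| ≤ b - 2) {n : ℕ} {i : ℤ}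
    (h : n * arg (pathPolyRoot b x) = i * π) :
    aeval x (pathPoly b n) = (-1) ^ i * ‖pathPolyRoot b x‖ ^ n * x := by
  have hdisc := discr_neg_of_abs_le hx
  rw [eq_mul_of_pow_eq_ofReal (u := fun m => aeval x (pathPoly b m)) (z := pathPolyRoot b x)
    (upperRoot_im_pos hdisc).ne' (upperRoot_sq hdisc) (fun m => aeval_pathPoly_add_two b m x)
    (pow_eq_neg_one_zpow_mul_norm_pow h), aeval_pathPoly_zero]

lemma continuousOn_arg_pathPolyRoot :
    ContinuousOn (fun x => arg (pathPolyRoot b x)) {x | |x| ≤ b - 2} := fun x hx =>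
  (continuousAt_arg (mem_slitPlane_iff.2 (Or.inr (upperRoot_im_pos
    (discr_neg_of_abs_le hx)).ne'))).comp_continuousWithinAt (f := pathPolyRoot b)
    (by unfold pathPolyRoot upperRoot; fun_prop : Continuous (pathPolyRoot b)).continuousWithinAt

lemma arg_pathPolyRoot_ne {x y : ℝ} (hxy : x < y) (hx : |x| ≤ b - 2) (hy : |y| ≤ b - 2) :
    arg (pathPolyRoot b x) ≠ arg (pathPolyRoot b y) := fun h => by
  rw [abs_le] at hx hy
  exact (sq_mul_lt_sq_mul (by linarith) hxy hy.2).ne <| sq_mul_eq_of_arg_upperRoot_eq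
    (discr_neg_of_abs_le (abs_le.2 hx)) (discr_neg_of_abs_le (abs_le.2 hy)) h

theorem exists_aeval_pathPoly_eq_zero {k₁ k₂ : ℝ} (hk : k₁ < k₂)
    (hbound : ∀ x ∈ Icc k₁ k₂, |x| ≤ b - 2) (hsign : 0 ≤ k₁ ∨ k₂ ≤ 0) :
    ∃ n, 0 < n ∧ ∃ a ∈ Icc k₁ k₂, aeval a (pathPoly b n) = 0 := by
  set θ := fun x => arg (pathPolyRoot b x)
  have hk₁ : k₁ ∈ Icc k₁ k₂ := left_mem_Icc.2 hk.le
  have hk₂ : k₂ ∈ Icc k₁ k₂ := right_mem_Icc.2 hk.le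
  have hΔ : 0 < |θ k₂ - θ k₁| :=
    abs_pos.2 (sub_ne_zero.2 (arg_pathPolyRoot_ne hk (hbound _ hk₁) (hbound _ hk₂)).symm)
  obtain ⟨n, hn⟩ := exists_nat_gt (2 * π / |θ k₂ - θ k₁|)
  have hn_pos : (0 : ℝ) < n := lt_trans (by positivity) hn
  obtain ⟨j, x₁, hx₁, x₂, hx₂, h₁, h₂⟩ :=
    exists_eq_int_mul_and_eq_int_add_one_mul (f := fun x => n * θ x) hk.le
      (continuousOn_const.mul (continuousOn_arg_pathPolyRoot.mono hbound)) Real.pi_pos (by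
        rw [← mul_sub, abs_mul, Nat.abs_cast]
        exact (div_lt_iff₀ hΔ).1 hn)
  have hx₁₂ : 0 ≤ x₁ * x₂ := by
    rcases hsign with h | h
    · exact mul_nonneg (by linarith [hx₁.1]) (by linarith [hx₂.1])
    · exact mul_nonneg_of_nonpos_of_nonpos (by linarith [hx₁.2]) (by linarith [hx₂.2])
  obtain ⟨a, ha, hroot⟩ := exists_mem_uIcc_eq_zero_of_mul_nonpos (x := x₁) (y := x₂)
    (Polynomial.continuous_aeval (pathPoly b n)).continuousOn (by
      rw [aeval_pathPoly_of_mul_arg_eq (hbound _ hx₁) h₁,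
        aeval_pathPoly_of_mul_arg_eq (hbound _ hx₂) (i := j + 1) (by push_cast; exact h₂),
        zpow_add_one₀ (by norm_num)]
      nlinarith [mul_nonneg (by positivity : 0 ≤ ((-1 : ℝ) ^ j) ^ 2 *
        ‖pathPolyRoot b x₁‖ ^ n * ‖pathPolyRoot b x₂‖ ^ n) hx₁₂])
  exact ⟨n, by exact_mod_cast hn_pos, a, uIcc_subset_Icc hx₁ hx₂ ha, hroot⟩

end RootsOfPathPoly

lemma disjoint_disjUnion_bot {α β : Type*} (G : SimpleGraph α) (H : SimpleGraph β) :
    Disjoint (disjUnion G ⊥) (disjUnion ⊥ H) :=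
  SimpleGraph.disjoint_left.2 (by rintro (u | u) (v | v) <;> simp [disjUnion])

lemma exists_Icc_subset_ball_of_nonneg_or_nonpos (r : ℝ) {ε : ℝ} (hε : 0 < ε) :
    ∃ k₁ k₂, k₁ < k₂ ∧ Set.Icc k₁ k₂ ⊆ Metric.ball r ε ∧ (0 ≤ k₁ ∨ k₂ ≤ 0) := by
  rcases le_total 0 r with hr | hr
  · refine ⟨r, r + ε / 2, by linarith, fun x hx => ?_, Or.inl hr⟩
    rw [Metric.mem_ball, Real.dist_eq, abs_lt]
    constructor <;> linarith [hx.1, hx.2]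
  · refine ⟨r - ε / 2, r, by linarith, fun x hx => ?_, Or.inr hr⟩
    rw [Metric.mem_ball, Real.dist_eq, abs_lt]
    constructor <;> linarith [hx.1, hx.2]

/-- The real roots of chromatic polynomials of bichromatic 2-edge-coloured graphs are
dense in `ℝ`. -/
theorem bichromatic_real_roots_dense (r : ℝ) (ε : ℝ) (hε : 0 < ε) :
    ∃ (n : ℕ) (R B : SimpleGraph (Fin n)) (P : Polynomial ℚ) (a : ℝ),
      Disjoint R B ∧ R ≠ ⊥ ∧ B ≠ ⊥ ∧
      (∀ k : ℕ, P.eval (k : ℚ) = numColourings R B ⊥ k) ∧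
      |r - a| < ε ∧ Polynomial.aeval a P = 0 := by
  obtain ⟨k₁, k₂, hk, hball, hsign⟩ := exists_Icc_subset_ball_of_nonneg_or_nonpos r hε
  set b := ⌈|r| + ε⌉₊ + 2
  have hbound : ∀ x ∈ Set.Icc k₁ k₂, |x| ≤ b - 2 := fun x hx => by
    have hx := Metric.mem_ball.1 (hball hx)
    rw [Real.dist_eq] at hx
    push_cast [b]
    linarith [Nat.le_ceil (|r| + ε), abs_sub_abs_le_abs_sub x r]
  obtain ⟨m, hm, a, ha, hroot⟩ := exists_aeval_pathPoly_eq_zero hk hbound hsign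
  let e : Fin (m + 1 + b) ≃ Fin (m + 1) ⊕ Fin b := finSumFinEquiv.symm
  refine ⟨m + 1 + b, (disjUnion (pathGraph (m + 1)) ⊥).comap e, (disjUnion ⊥ ⊤).comap e,
    descPochhammer ℚ b * pathPoly b m, a, ?_, ?_, ?_, fun k => ?_, ?_, ?_⟩
  · exact SimpleGraph.disjoint_left.2 fun x y =>
      SimpleGraph.disjoint_left.1 (disjoint_disjUnion_bot _ _) (e x) (e y)
  · exact ne_bot_iff_exists_adj.2 ⟨e.symm (.inl ⟨0, by omega⟩), e.symm (.inl ⟨1, by omega⟩),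
      by simp [disjUnion, pathGraph_adj]⟩
  · exact ne_bot_iff_exists_adj.2 ⟨e.symm (.inr ⟨0, by omega⟩), e.symm (.inr ⟨1, by omega⟩),
      by simp [disjUnion]⟩
  · rw [← cast_numColourings_disjUnion_pathGraph, ← numColourings_comap e _ _ ⊥]
    rfl
  · rw [abs_sub_comm, ← Real.dist_eq]
    exact hball ha
  · rw [map_mul, hroot, mul_zero]
end
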